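/- arXiv:2110.01847 — 2 statements merged into one kernel-verified Lean document; each statement's English description precedes it below -/
import Mathlib

section
/- Let q ≡ 1 (mod 4) be a prime power, i ∈ F_q with i² = -1, and let G = PSL(2,q) act on P = (F_q² \ {0})/⟨i⟩, the nonzero vectors modulo scalar multiplication by powers of i. Then the stabilizer in G of the class of the vector (1,0) is isomorphic to (C_p)^α ⋊ C₂, where q = p^α. -/
open Matrix MulAction Pointwise

abbrev SL2 (F : Type) [Field F] := Matrix.SpecialLinearGroup (Fin 2) F

abbrev PSL2 (F : Type) [Field F] := SL2 F ⧸ Subgroup.center (SL2 F)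

/-- Nonzero vectors of `F²`. -/
def Vec (F : Type) [Field F] := {v : Fin 2 → F // v ≠ 0}

/-- Two nonzero vectors are related if they differ by multiplication by a power of `i`. -/
def vrel (F : Type) [Field F] (i : F) (v w : Vec F) : Prop :=
  ∃ n : ℕ, (w.1 : Fin 2 → F) = i ^ n • v.1

/-- The point set `P = (F² \ {0})/⟨i⟩`. -/
def Pts (F : Type) [Field F] (i : F) := Quot (vrel F i)

/-- The class of a nonzero vector in `P`. -/
def mkPt (F : Type) [Field F] (i : F) (v : Fin 2 → F) (hv : v ≠ 0) : Pts F i :=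
  Quot.mk _ ⟨v, hv⟩

lemma vec_fst_ne_zero {F : Type} [Field F] (b : F) : ![(1 : F), b] ≠ 0 := by
  intro h
  simpa using congrFun h 0

lemma vec_snd_ne_zero {F : Type} [Field F] (a : F) : ![a, (1 : F)] ≠ 0 := by
  intro h
  simpa using congrFun h 1

/-- `SL(2,q)` acts on nonzero vectors. -/
def slVecSMul {F : Type} [Field F] (A : SL2 F) (v : Vec F) : Vec F :=
  ⟨(A : Matrix (Fin 2) (Fin 2) F) *ᵥ v.1, by
    intro h
    apply v.2
    have h2 : ((A⁻¹ : SL2 F) : Matrix (Fin 2) (Fin 2) F) *ᵥ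
        ((A : Matrix (Fin 2) (Fin 2) F) *ᵥ v.1) = 0 := by rw [h, Matrix.mulVec_zero]
    rwa [Matrix.mulVec_mulVec, ← Matrix.SpecialLinearGroup.coe_mul, inv_mul_cancel,
      Matrix.SpecialLinearGroup.coe_one, Matrix.one_mulVec] at h2⟩

instance (F : Type) [Field F] (i : F) : SMul (SL2 F) (Pts F i) :=
  ⟨fun A => Quot.map (slVecSMul A) (by
    rintro v w ⟨n, hn⟩
    exact ⟨n, by simp [slVecSMul, hn, Matrix.mulVec_smul]⟩)⟩

instance (F : Type) [Field F] (i : F) : MulAction (SL2 F) (Pts F i) where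
  one_smul p := by
    induction p using Quot.ind with | _ v => ?_
    show Quot.mk _ (slVecSMul 1 v) = Quot.mk _ v
    congr 1
    apply Subtype.ext
    show ((1 : SL2 F) : Matrix (Fin 2) (Fin 2) F) *ᵥ v.1 = v.1
    rw [Matrix.SpecialLinearGroup.coe_one, Matrix.one_mulVec]
  mul_smul A B p := by
    induction p using Quot.ind with | _ v => ?_
    show Quot.mk _ (slVecSMul (A * B) v) = Quot.mk _ (slVecSMul A (slVecSMul B v))
    congr 1
    apply Subtype.ext
    show ((A * B : SL2 F) : Matrix (Fin 2) (Fin 2) F) *ᵥ v.1 =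
      (A : Matrix (Fin 2) (Fin 2) F) *ᵥ ((B : Matrix (Fin 2) (Fin 2) F) *ᵥ v.1)
    rw [Matrix.SpecialLinearGroup.coe_mul, Matrix.mulVec_mulVec]

/-- The stabilizer in `PSL(2,q)` of a point of `P`, i.e. the image in the quotient
`PSL(2,q) = SL(2,q)/center` of the stabilizer in `SL(2,q)`. -/
def pslPtStab (F : Type) [Field F] (i : F) (p : Pts F i) : Subgroup (PSL2 F) :=
  (MulAction.stabilizer (SL2 F) p).map (QuotientGroup.mk' (Subgroup.center (SL2 F)))

/-- The setwise stabilizer in `PSL(2,q)` of a set of points of `P`. -/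
def pslSetStab (F : Type) [Field F] (i : F) (s : Set (Pts F i)) : Subgroup (PSL2 F) :=
  (MulAction.stabilizer (SL2 F) s).map (QuotientGroup.mk' (Subgroup.center (SL2 F)))


/-!
A matrix of `SL(2, F)` fixes the class of `(1, 0)` exactly when it is upper triangular with
diagonal entries `iⁿ, i⁻ⁿ`, i.e. when it lies in `U · ⟨w⟩`, where `U ≅ F` is the group of upper
unitriangular matrices and `w = diag(i, -i)`. Conjugation by `w` multiplies the corner entry of
`U` by `i² = -1`, and `w² = -1` is central, so the image in `PSL(2, F)` is `F ⋊ C₂` with `C₂`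
acting by inversion; it is a genuine semidirect product because `w ∉ ±U` when `i ≠ -i`, that
is in odd characteristic. Finally `F ≅ (C_p)^α` as an `𝔽_p`-vector space.
-/

section Involution

variable {G : Type*} [Group G]

def zmodTwoHom (w : G) (hw : w ^ 2 = 1) : Multiplicative (ZMod 2) →* G :=
  AddMonoidHom.toMultiplicativeLeft
    (ZMod.lift 2
      ⟨zmultiplesHom (Additive G) (Additive.ofMul w), by simp [← ofMul_zpow, hw]⟩)

@[simp]
lemma zmodTwoHom_ofAdd_one (w : G) (hw : w ^ 2 = 1) :
    zmodTwoHom w hw (Multiplicative.ofAdd 1) = w := by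
  change Additive.toMul (ZMod.lift 2 _ ((1 : ℤ) : ZMod 2)) = w
  rw [ZMod.lift_coe]
  simp

lemma Multiplicative.zmodTwo_eq_one_or (g : Multiplicative (ZMod 2)) :
    g = 1 ∨ g = Multiplicative.ofAdd 1 := by
  revert g; decide

def inversionAction (A : Type*) [CommGroup A] : Multiplicative (ZMod 2) →* MulAut A :=
  zmodTwoHom (MulEquiv.inv A) (by ext; simp [pow_two])

end Involution

section SL2Matrices

variable {F : Type} [Field F]

def unipotentHom : Multiplicative F →* SL2 F where
  toFun b := ⟨!![1, b.toAdd; 0, 1], by simp [det_fin_two_of]⟩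
  map_one' := by ext i j; fin_cases i <;> fin_cases j <;> rfl
  map_mul' a b := Subtype.ext <| by change _ = _ * _; simp [add_comm]

def diagHom : Fˣ →* SL2 F where
  toFun t := ⟨!![(t : F), 0; 0, ((t⁻¹ : Fˣ) : F)], by simp [det_fin_two_of]⟩
  map_one' := by ext i j; fin_cases i <;> fin_cases j <;> simp
  map_mul' a b := Subtype.ext <| by change _ = _ * _; simp [mul_comm]

@[simp]
lemma coe_unipotentHom (b : Multiplicative F) :
    (unipotentHom b : Matrix (Fin 2) (Fin 2) F) = !![1, b.toAdd; 0, 1] := rfl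

@[simp]
lemma coe_diagHom (t : Fˣ) :
    (diagHom t : Matrix (Fin 2) (Fin 2) F) = !![(t : F), 0; 0, ((t⁻¹ : Fˣ) : F)] := rfl

lemma diagHom_mul_unipotentHom_mul_inv (t : Fˣ) (b : Multiplicative F) :
    diagHom t * unipotentHom b * (diagHom t)⁻¹ =
      unipotentHom (.ofAdd ((t : F) ^ 2 * b.toAdd)) := by
  rw [← map_inv]
  ext i j; fin_cases i <;> fin_cases j <;> simp [Matrix.mul_apply, Fin.sum_univ_two]; ring

lemma eq_diagHom_mul_unipotentHom {A : SL2 F} {t : Fˣ} (h00 : A 0 0 = t) (h10 : A 1 0 = 0) :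
    A = diagHom t * unipotentHom (.ofAdd ((t⁻¹ : Fˣ) * A 0 1)) := by
  have hdet : A 0 0 * A 1 1 - A 0 1 * A 1 0 = 1 := by rw [← det_fin_two]; exact A.2
  have h11 : A 1 1 = (t : F)⁻¹ := by
    rw [h00, h10, mul_zero, sub_zero] at hdet
    exact eq_inv_of_mul_eq_one_right hdet
  ext i j; fin_cases i <;> fin_cases j <;> simp [Matrix.mul_apply, Fin.sum_univ_two, h00, h10, h11]

lemma unipotentHom_mul_diagHom_mem_center_iff (b : Multiplicative F) (t : Fˣ) :
    unipotentHom b * diagHom t ∈ Subgroup.center (SL2 F) ↔ b = 1 ∧ (t : F) ^ 2 = 1 := by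
  have hsq : (t : F) ^ 2 = 1 ↔ (t : F) = (t : F)⁻¹ := by
    rw [← mul_eq_one_iff_eq_inv₀ t.ne_zero, sq]
  rw [Matrix.SpecialLinearGroup.mem_center_iff (n := Fin 2), hsq]
  constructor
  · rintro ⟨r, -, hr⟩
    have entry (i j : Fin 2) := congrFun (congrFun hr i) j
    have h00 := entry 0 0
    have h01 := entry 0 1
    have h11 := entry 1 1
    simp [Matrix.mul_apply, Fin.sum_univ_two] at h00 h01 h11
    exact ⟨h01, h00.symm.trans h11⟩
  · rintro ⟨rfl, ht⟩
    refine ⟨t, by rw [Fintype.card_fin, hsq, ← ht], ?_⟩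
    ext i j; fin_cases i <;> fin_cases j <;> simp [← ht]

end SL2Matrices

section Points

variable {F : Type} [Field F] {i : F}

lemma vrel_equivalence (hi : IsOfFinOrder i) : Equivalence (vrel F i) where
  refl _ := ⟨0, by simp⟩
  symm := by
    rintro v w ⟨n, hn⟩
    refine ⟨(orderOf i - 1) * n, ?_⟩
    rw [hn, smul_smul, ← pow_add, ← Nat.succ_mul, Nat.succ_eq_add_one,
      Nat.sub_add_cancel hi.orderOf_pos, pow_mul, pow_orderOf_eq_one, one_pow, one_smul]
  trans := by
    rintro u v w ⟨m, hm⟩ ⟨n, hn⟩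
    exact ⟨n + m, by rw [hn, hm, smul_smul, pow_add]⟩

lemma mkPt_eq_mkPt_iff (hi : IsOfFinOrder i) {v w : Fin 2 → F} (hv : v ≠ 0) (hw : w ≠ 0) :
    mkPt F i v hv = mkPt F i w hw ↔ ∃ n : ℕ, w = i ^ n • v :=
  Quot.eq.trans (vrel_equivalence hi).eqvGen_iff

lemma mem_stabilizer_mkPt_iff (hi : IsOfFinOrder i) (A : SL2 F) {v : Fin 2 → F} (hv : v ≠ 0) :
    A ∈ stabilizer (SL2 F) (mkPt F i v hv) ↔
      ∃ n : ℕ, (A : Matrix (Fin 2) (Fin 2) F) *ᵥ v = i ^ n • v := by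
  rw [mem_stabilizer_iff, eq_comm]
  exact mkPt_eq_mkPt_iff hi hv (slVecSMul A ⟨v, hv⟩).2

lemma mem_stabilizer_mkPt_e₁_iff (hi : IsOfFinOrder i) (A : SL2 F) :
    A ∈ stabilizer (SL2 F) (mkPt F i ![1, 0] (vec_fst_ne_zero 0)) ↔
      (∃ n : ℕ, A 0 0 = i ^ n) ∧ A 1 0 = 0 := by
  rw [mem_stabilizer_mkPt_iff hi]
  simp [funext_iff, Fin.forall_fin_two]

end Points

lemma FiniteField.nonempty_addEquiv_pi_zmod {F : Type*} [Field F] [Fintype F] {p n : ℕ}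
    [hp : Fact p.Prime] (h : Fintype.card F = p ^ n) : Nonempty (F ≃+ (Fin n → ZMod p)) := by
  have := charP_of_card_eq_prime_pow h
  let := ZMod.algebra F p
  have hrank : Module.finrank (ZMod p) F = n := by
    have hcard := Module.card_eq_pow_finrank (K := ZMod p) (V := F)
    rw [ZMod.card, h] at hcard
    exact (Nat.pow_right_injective hp.out.two_le hcard).symm
  exact ⟨(Module.finBasisOfFinrankEq (ZMod p) F hrank).equivFun.toAddEquiv⟩

section Stabilizer

variable {F : Type} [Field F] {ι : Fˣ}

local notation "π" => QuotientGroup.mk' (Subgroup.center (SL2 F))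

lemma mk_diagHom_sq_eq_one (hι : (ι : F) ^ 2 = -1) : π (diagHom ι) ^ 2 = 1 := by
  rw [← map_pow, QuotientGroup.mk'_apply, QuotientGroup.eq_one_iff, ← one_mul (diagHom ι ^ 2),
    ← map_one unipotentHom, ← map_pow, unipotentHom_mul_diagHom_mem_center_iff]
  simp [hι]

lemma diagHom_mul_unipotentHom_mul_inv_of_sq_eq_neg_one (hι : (ι : F) ^ 2 = -1)
    (b : Multiplicative F) : diagHom ι * unipotentHom b * (diagHom ι)⁻¹ = (unipotentHom b)⁻¹ := by
  rw [diagHom_mul_unipotentHom_mul_inv, hι, neg_one_mul, ofAdd_neg, ofAdd_toAdd, map_inv]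

def stabHom (hι : (ι : F) ^ 2 = -1) :
    Multiplicative F ⋊[inversionAction _] Multiplicative (ZMod 2) →* PSL2 F :=
  SemidirectProduct.lift ((π).comp unipotentHom)
    (zmodTwoHom (π (diagHom ι)) (mk_diagHom_sq_eq_one hι)) <| by
    intro g
    rcases Multiplicative.zmodTwo_eq_one_or g with rfl | rfl
    · ext; simp
    · ext b
      simpa [inversionAction] using
        congrArg π (diagHom_mul_unipotentHom_mul_inv_of_sq_eq_neg_one hι (.ofAdd b)).symm

lemma stabHom_injective (hι : (ι : F) ^ 2 = -1) (hF : ringChar F ≠ 2) :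
    Function.Injective (stabHom hι) := by
  rw [injective_iff_map_eq_one]
  rintro ⟨b, k⟩ hbk
  rcases Multiplicative.zmodTwo_eq_one_or k with rfl | rfl
  · have hb : unipotentHom b * diagHom 1 ∈ Subgroup.center (SL2 F) := by
      rw [← QuotientGroup.eq_one_iff]; simpa [stabHom] using hbk
    rw [(unipotentHom_mul_diagHom_mem_center_iff b 1).mp hb |>.1]
    rfl
  · have hb : unipotentHom b * diagHom ι ∈ Subgroup.center (SL2 F) := by
      rw [← QuotientGroup.eq_one_iff]; simpa [stabHom] using hbk
    have hι' := (unipotentHom_mul_diagHom_mem_center_iff b ι).mp hb |>.2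
    exact absurd (hι.symm.trans hι') (Ring.neg_one_ne_one_of_char_ne_two hF)

lemma range_stabHom (hι : (ι : F) ^ 2 = -1) :
    (stabHom hι).range = pslPtStab F ι (mkPt F ι ![1, 0] (vec_fst_ne_zero 0)) := by
  have hfin : IsOfFinOrder (ι : F) := isOfFinOrder_iff_pow_eq_one.mpr
    ⟨4, by norm_num, by rw [show 4 = 2 * 2 by rfl, pow_mul, hι]; norm_num⟩
  have hu (b : Multiplicative F) :
      unipotentHom b ∈ stabilizer (SL2 F) (mkPt F ι ![1, 0] (vec_fst_ne_zero 0)) :=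
    (mem_stabilizer_mkPt_e₁_iff hfin _).mpr ⟨⟨0, by simp⟩, rfl⟩
  have hd : diagHom ι ∈ stabilizer (SL2 F) (mkPt F ι ![1, 0] (vec_fst_ne_zero 0)) :=
    (mem_stabilizer_mkPt_e₁_iff hfin _).mpr ⟨⟨1, by simp⟩, rfl⟩
  apply le_antisymm
  · rintro _ ⟨⟨b, k⟩, rfl⟩
    rcases Multiplicative.zmodTwo_eq_one_or k with rfl | rfl
    · exact ⟨unipotentHom b, hu b, by simp [stabHom]⟩
    · exact ⟨unipotentHom b * diagHom ι, mul_mem (hu b) hd, by simp [stabHom]⟩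
  · rintro _ ⟨A, hA, rfl⟩
    obtain ⟨⟨n, h00⟩, h10⟩ := (mem_stabilizer_mkPt_e₁_iff hfin A).mp hA
    rw [eq_diagHom_mul_unipotentHom (t := ι ^ n) (by simpa using h00) h10, map_pow, map_mul,
      map_pow]
    exact mul_mem (pow_mem (MonoidHom.mem_range.mpr ⟨.inr (.ofAdd 1), by simp [stabHom]⟩) n)
      (MonoidHom.mem_range.mpr ⟨.inl (.ofAdd ((ι ^ n)⁻¹ * A 0 1)), by simp [stabHom]⟩)

end Stabilizer

lemma nonempty_pslPtStab_mulEquiv_semidirectProduct {F : Type} [Field F] (hF : ringChar F ≠ 2)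
    {i : F} (hi : i ^ 2 = -1) :
    Nonempty (pslPtStab F i (mkPt F i ![1, 0] (vec_fst_ne_zero 0)) ≃*
      Multiplicative F ⋊[inversionAction _] Multiplicative (ZMod 2)) := by
  obtain ⟨ι, rfl⟩ : IsUnit i := Ne.isUnit (by rintro rfl; simp at hi)
  exact ⟨(MulEquiv.subgroupCongr (range_stabHom hi)).symm.trans
    (MonoidHom.ofInjective (stabHom_injective hi hF)).symm⟩

theorem stmt_3_general (p α : ℕ) [Fact p.Prime]
    (F : Type) [Field F] [Fintype F]
    (hcard : Fintype.card F = p ^ α) (hq : Fintype.card F % 4 = 1)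
    (i : F) (hi : i ^ 2 = -1) :
    ∃ φ : Multiplicative (ZMod 2) →* MulAut (Fin α → Multiplicative (ZMod p)),
      Nonempty ((pslPtStab F i (mkPt F i ![1, 0] (vec_fst_ne_zero 0))) ≃*
        SemidirectProduct (Fin α → Multiplicative (ZMod p)) (Multiplicative (ZMod 2)) φ) := by
  have hF : ringChar F ≠ 2 := by
    rw [Ne, FiniteField.even_card_iff_char_two]
    omega
  obtain ⟨e⟩ := FiniteField.nonempty_addEquiv_pi_zmod hcard
  obtain ⟨ψ⟩ := nonempty_pslPtStab_mulEquiv_semidirectProduct hF hi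
  exact ⟨_, ⟨ψ.trans (SemidirectProduct.congr'
    (e.toMultiplicative.trans (MulEquiv.piMultiplicative _)) (MulEquiv.refl _))⟩⟩

/-- The stabilizer in `PSL(2,q)` of the point `[(1,0)]` of `P = (F_q²∖{0})/⟨i⟩` is
isomorphic to `(C_p)^α ⋊ C₂`, where `q = p^α`. -/
theorem stmt_3 (p α : ℕ) [Fact p.Prime] (hα : 0 < α)
    (F : Type) [Field F] [Fintype F]
    (hcard : Fintype.card F = p ^ α) (hq : Fintype.card F % 4 = 1)
    (i : F) (hi : i ^ 2 = -1) :
    ∃ φ : Multiplicative (ZMod 2) →* MulAut (Fin α → Multiplicative (ZMod p)),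
      Nonempty ((pslPtStab F i (mkPt F i ![1, 0] (vec_fst_ne_zero 0))) ≃*
        SemidirectProduct (Fin α → Multiplicative (ZMod p)) (Multiplicative (ZMod 2)) φ) :=
  stmt_3_general p α F hcard hq i hi
end

section
/- Let q ≡ 1 (mod 4) be a prime power not a power of 5. In the octahedral design D with |B| = q(q²-1)/24 blocks, each block containing 3 diagonals, and q(q²-1)/8 diagonals in total on which the group acts transitively: every diagonal is contained in exactly one block. -/
/-! Double count the incidences (diagonal, block containing it). Since the group is transitive
on diagonals, every diagonal lies in the same number `r` of blocks, so `r · |Δ| = 3 · |B|`.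
For odd `q` we have `24 ∣ q(q² - 1)`, so the given sizes say `|Δ| = 3 · |B|` with `|B| > 0`,
forcing `r = 1`. -/

open Matrix MulAction Pointwise

/-- The basic block (octahedron) `T`. -/
def basicT (F : Type) [Field F] (i : F) : Set (Pts F i) :=
  {mkPt F i ![1, 0] (vec_fst_ne_zero 0), mkPt F i ![0, 1] (vec_snd_ne_zero 0),
   mkPt F i ![1, 1] (vec_fst_ne_zero 1), mkPt F i ![1 + i, 1] (vec_snd_ne_zero (1 + i)),
   mkPt F i ![i, 1] (vec_snd_ne_zero i), mkPt F i ![1, 1 - i] (vec_fst_ne_zero (1 - i))}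

/-- The set of diagonals: the orbit of the basic diagonal `{[(1,0)], [(1,1-i)]}`. -/
def diagonals (F : Type) [Field F] (i : F) : Set (Set (Pts F i)) :=
  MulAction.orbit (SL2 F)
    ({mkPt F i ![1, 0] (vec_fst_ne_zero 0),
      mkPt F i ![1, 1 - i] (vec_fst_ne_zero (1 - i))} : Set (Pts F i))

instance {F : Type} [Field F] [Finite F] {i : F} : Finite (Pts F i) :=
  have : Finite (Vec F) := Subtype.finite
  Quot.finite _

theorem Set.natCard_mul_eq_natCard_mul {α β : Type*} (r : α → β → Prop) {s : Set α}
    {t : Set β} (hs : s.Finite) (ht : t.Finite) {m n : ℕ}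
    (hm : ∀ a ∈ s, Nat.card {b | b ∈ t ∧ r a b} = m)
    (hn : ∀ b ∈ t, Nat.card {a | a ∈ s ∧ r a b} = n) :
    Nat.card s * m = Nat.card t * n := by
  classical
  rw [Nat.card_eq_card_finite_toFinset hs, Nat.card_eq_card_finite_toFinset ht]
  refine Finset.card_mul_eq_card_mul r (fun a ha => ?_) (fun b hb => ?_)
  · rw [← hm a (by simpa using ha), ← Nat.card_eq_finsetCard]
    exact Nat.card_congr (Equiv.subtypeEquivRight fun _ => by simp [Finset.bipartiteAbove])
  · rw [← hn b (by simpa using hb), ← Nat.card_eq_finsetCard]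
    exact Nat.card_congr (Equiv.subtypeEquivRight fun _ => by simp [Finset.bipartiteBelow])

theorem MulAction.natCard_orbit_superset_smul {G α : Type*} [Group G] [MulAction G α]
    (x d : Set α) (g : G) :
    Nat.card {β | β ∈ orbit G x ∧ g • d ⊆ β} = Nat.card {β | β ∈ orbit G x ∧ d ⊆ β} := by
  have : {β | β ∈ orbit G x ∧ g • d ⊆ β} = g • {β | β ∈ orbit G x ∧ d ⊆ β} := by
    ext β
    simp only [Set.mem_smul_set_iff_inv_smul_mem, Set.mem_ofPred,
      Set.smul_set_subset_iff_subset_inv_smul_set, mem_orbit_symm (a₂ := x), orbit_smul]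
  rw [this, Set.natCard_smul_set]

theorem Nat.three_dvd_mul_sq_sub_one (q : ℕ) : 3 ∣ q * (q ^ 2 - 1) := by
  rcases q.eq_zero_or_pos with rfl | hq
  · simp
  rw [← ZMod.natCast_eq_zero_iff, Nat.cast_mul, Nat.cast_sub (Nat.one_le_pow _ _ hq),
    Nat.cast_pow, Nat.cast_one]
  generalize (q : ZMod 3) = x
  revert x
  decide

theorem Nat.twentyFour_dvd_mul_sq_sub_one_of_odd {q : ℕ} (hq : Odd q) :
    24 ∣ q * (q ^ 2 - 1) :=
  Nat.Coprime.mul_dvd_of_dvd_of_dvd (by norm_num : Nat.Coprime 8 3)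
    (dvd_mul_of_dvd_right (Nat.eight_dvd_sq_sub_one_of_odd hq) q) (Nat.three_dvd_mul_sq_sub_one q)

theorem stmt_11_general (q : ℕ) (F : Type) [Field F] [Fintype F]
    (hcard : Fintype.card F = q) (hq : q % 4 = 1)
    (i : F)
    (hB : Nat.card (MulAction.orbit (SL2 F) (basicT F i)) = q * (q ^ 2 - 1) / 24)
    (hΔ : Nat.card (diagonals F i) = q * (q ^ 2 - 1) / 8)
    (h3 : ∀ β ∈ MulAction.orbit (SL2 F) (basicT F i),
      Nat.card {d : Set (Pts F i) | d ∈ diagonals F i ∧ d ⊆ β} = 3) :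
    ∀ d ∈ diagonals F i,
      Nat.card {β : Set (Pts F i) | β ∈ MulAction.orbit (SL2 F) (basicT F i) ∧ d ⊆ β} = 1 := by
  obtain ⟨r, hr⟩ : ∃ r, ∀ d ∈ diagonals F i,
      Nat.card {β | β ∈ orbit (SL2 F) (basicT F i) ∧ d ⊆ β} = r :=
    ⟨_, by rintro _ ⟨g, rfl⟩; exact natCard_orbit_superset_smul _ _ g⟩
  intro d hd
  rw [hr d hd]
  have hcount := Set.natCard_mul_eq_natCard_mul (fun d β : Set (Pts F i) => d ⊆ β)
    (Set.toFinite _) (Set.toFinite _) hr h3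
  have hq3 : 3 ≤ q := by
    have := hcard ▸ Fintype.one_lt_card (α := F)
    omega
  obtain ⟨m, hm⟩ := Nat.twentyFour_dvd_mul_sq_sub_one_of_odd (q := q) (Nat.odd_iff.mpr (by omega))
  have hm0 : 0 < m := by
    have : 0 < q * (q ^ 2 - 1) := Nat.mul_pos (by omega) (Nat.sub_pos_of_lt (by nlinarith))
    omega
  rw [hΔ, hB, hm, show 24 * m / 8 = 3 * m by omega, show 24 * m / 24 = m by omega] at hcount
  exact Nat.eq_of_mul_eq_mul_left (by omega : 0 < 3 * m) (by linarith)

/-- In the octahedral design with `|B| = q(q²-1)/24` blocks, each block containing 3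
diagonals, and `q(q²-1)/8` diagonals in total, every diagonal is contained in exactly
one block. -/
theorem stmt_11 (q : ℕ) (F : Type) [Field F] [Fintype F]
    (hcard : Fintype.card F = q) (hq : q % 4 = 1) (h5 : ringChar F ≠ 5)
    (i : F) (hi : i ^ 2 = -1)
    (hB : Nat.card (MulAction.orbit (SL2 F) (basicT F i)) = q * (q ^ 2 - 1) / 24)
    (hΔ : Nat.card (diagonals F i) = q * (q ^ 2 - 1) / 8)
    (h3 : ∀ β ∈ MulAction.orbit (SL2 F) (basicT F i),
      Nat.card {d : Set (Pts F i) | d ∈ diagonals F i ∧ d ⊆ β} = 3) :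
    ∀ d ∈ diagonals F i,
      Nat.card {β : Set (Pts F i) | β ∈ MulAction.orbit (SL2 F) (basicT F i) ∧ d ⊆ β} = 1 :=
  stmt_11_general q F hcard hq i hB hΔ h3
end
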